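/- Let d = 2, U := {e ∈ ℤ² : |e|₁ = 1}, and define probability vectors p(e) := 1/4 for all e ∈ U, and q(±e₁) := 1/6, q(±e₂) := 1/3. Define space-time environments ξ, ξ' ∈ (𝒫(U)^{ℤ²})^ℕ by ξ_n(x,·) := p if |x|₁ + n is even and q if |x|₁ + n is odd, and ξ'_n(x,·) := p if |x|₁ + n is odd and q if |x|₁ + n is even. Let ℙ := ½δ_ξ + ½δ_{ξ'}. Then: (a) for every e ∈ U, θ_{1,e}ξ = ξ and θ_{1,e}ξ' = ξ', while θ_{1,0}ξ = ξ' and θ_{1,0}ξ' = ξ; (b) consequently the event {ω = ξ} is invariant under every θ_{1,e}, e ∈ U, and has ℙ-measure 1/2, so {θ_{1,e} : e ∈ U} is NOT an ergodic family of transformations for ℙ; (c) the enlarged family {θ_{1,e} : e ∈ ℤ², |e|₁ ≤ 1} IS an ergodic family for ℙ. -/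

import Mathlib

/-! Both `ξ` and `ξ'` are checkerboards in the space-time parity of `|x|₁ + n`, so a shift
`θ_{n,x}` fixes each of them when `|x|₁ + n` is even and swaps them when it is odd. Hence the
shifts `θ_{1,e}`, `e ∈ U`, fix both atoms of `ℙ`, and the event "eventually in time equal to `ξ`"
is invariant under them and has probability `1/2`. The shift `θ_{1,0}` swaps the atoms, so an
event invariant under the enlarged family contains both atoms or neither. -/

open MeasureTheory

namespace CounterexampleErgodicity

/-- Points of the lattice `ℤ²`. -/
abbrev Z2 := Fin 2 → ℤ

/-- The space of time-dependent environments on `ℤ²`. -/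
abbrev EnvSpace2 := ℕ → Z2 → Z2 → ℝ

/-- The space-time shift `θ_{n,x}`. -/
def thetaShift (n : ℕ) (x : Z2) (ω : EnvSpace2) : EnvSpace2 :=
  fun m y e => ω (n + m) (y + x) e

/-- The jump range `U = {e ∈ ℤ² : |e|₁ = 1}`. -/
def U2 : Finset Z2 := {![1, 0], ![-1, 0], ![0, 1], ![0, -1]}

/-- The probability vector `p`: `p(e) = 1/4` for all `e`, `|e|₁ = 1`. -/
noncomputable def pvec : Z2 → ℝ := fun e => if e ∈ U2 then 1 / 4 else 0

/-- The probability vector `q`: `q(±e₁) = 1/6`, `q(±e₂) = 1/3`. -/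
noncomputable def qvec : Z2 → ℝ := fun e =>
  if e = ![1, 0] ∨ e = ![-1, 0] then 1 / 6
  else if e = ![0, 1] ∨ e = ![0, -1] then 1 / 3 else 0

/-- The `ℓ¹`-norm of a point of `ℤ²`. -/
def normOne (x : Z2) : ℕ := (x 0).natAbs + (x 1).natAbs

/-- The environment `ξ`: `p` at space-time points with `|x|₁ + n` even, `q` otherwise. -/
noncomputable def xi : EnvSpace2 := fun n x =>
  if Even (normOne x + n) then pvec else qvec

/-- The environment `ξ'`: `p` at space-time points with `|x|₁ + n` odd, `q` otherwise. -/
noncomputable def xi' : EnvSpace2 := fun n x =>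
  if Even (normOne x + n) then qvec else pvec

/-- The environment law `ℙ = ½ δ_ξ + ½ δ_{ξ'}`. -/
noncomputable def Plaw : Measure EnvSpace2 :=
  (1 / 2 : ENNReal) • Measure.dirac xi + (1 / 2 : ENNReal) • Measure.dirac xi'

open Filter

lemma normOne_add_mod_two (x y : Z2) : normOne (x + y) % 2 = (normOne x + normOne y) % 2 := by
  simp only [normOne, Pi.add_apply]
  omega

noncomputable def checkerboard (a b : Z2 → ℝ) : EnvSpace2 := fun n x =>
  if Even (normOne x + n) then a else b

lemma xi_eq_checkerboard : xi = checkerboard pvec qvec := rfl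

lemma xi'_eq_checkerboard : xi' = checkerboard qvec pvec := rfl

lemma thetaShift_checkerboard (a b : Z2 → ℝ) (n : ℕ) (x : Z2) :
    thetaShift n x (checkerboard a b) =
      if Even (normOne x + n) then checkerboard a b else checkerboard b a := by
  funext m y
  show (if Even (normOne (y + x) + (n + m)) then a else b) = _
  have hparity :
      Even (normOne (y + x) + (n + m)) ↔ (Even (normOne y + m) ↔ Even (normOne x + n)) := by
    have := normOne_add_mod_two y x
    simp only [Nat.even_iff]
    omega
  by_cases hx : Even (normOne x + n) <;> by_cases hy : Even (normOne y + m) <;>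
    simp [checkerboard, hparity, hx, hy]

lemma checkerboard_apply_diag (a b : Z2 → ℝ) (m : ℕ) : checkerboard a b m ![(m : ℤ), 0] = a := by
  simp [checkerboard, normOne]

lemma checkerboard_ne_swap {a b : Z2 → ℝ} (hab : a ≠ b) (m : ℕ) :
    checkerboard a b m ≠ checkerboard b a m := fun h =>
  hab (by simpa only [checkerboard_apply_diag] using congrFun h ![(m : ℤ), 0])

lemma pvec_ne_qvec : pvec ≠ qvec := fun h => by
  have := congrFun h ![1, 0]
  norm_num [pvec, qvec, U2] at this

lemma normOne_of_mem_U2 {e : Z2} (he : e ∈ U2) : normOne e = 1 := by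
  fin_cases he <;> decide

lemma thetaShift_xi_of_mem_U2 {e : Z2} (he : e ∈ U2) : thetaShift 1 e xi = xi := by
  simp [xi_eq_checkerboard, thetaShift_checkerboard, normOne_of_mem_U2 he]

lemma thetaShift_xi'_of_mem_U2 {e : Z2} (he : e ∈ U2) : thetaShift 1 e xi' = xi' := by
  simp [xi'_eq_checkerboard, thetaShift_checkerboard, normOne_of_mem_U2 he]

lemma thetaShift_one_zero_xi : thetaShift 1 0 xi = xi' := by
  simp [xi_eq_checkerboard, xi'_eq_checkerboard, thetaShift_checkerboard, normOne]

lemma thetaShift_one_zero_xi' : thetaShift 1 0 xi' = xi := by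
  simp [xi_eq_checkerboard, xi'_eq_checkerboard, thetaShift_checkerboard, normOne]

lemma xi_ne_xi' : xi ≠ xi' := fun h =>
  checkerboard_ne_swap pvec_ne_qvec 0 (congrFun h 0)

/-- `{ω | ω = ξ}` is invariant only up to `ℙ`-null sets; this tail event is invariant exactly. -/
def eventuallyEqSet (ω₀ : EnvSpace2) : Set EnvSpace2 := {ω | ∀ᶠ m in atTop, ω m = ω₀ m}

lemma measurableSet_eventuallyEqSet (ω₀ : EnvSpace2) : MeasurableSet (eventuallyEqSet ω₀) := by
  have : eventuallyEqSet ω₀ = ⋃ N : ℕ, ⋂ m ≥ N, (fun ω : EnvSpace2 => ω m) ⁻¹' {ω₀ m} := by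
    ext ω
    simp [eventuallyEqSet, eventually_atTop]
  rw [this]
  exact .iUnion fun N => .iInter fun m => .iInter fun _ =>
    measurable_pi_apply m (measurableSet_singleton _)

lemma preimage_thetaShift_eventuallyEqSet {n : ℕ} {x : Z2} {ω₀ : EnvSpace2}
    (hω₀ : thetaShift n x ω₀ = ω₀) :
    thetaShift n x ⁻¹' eventuallyEqSet ω₀ = eventuallyEqSet ω₀ := by
  ext ω
  have hshift (m : ℕ) : thetaShift n x ω m = ω₀ m ↔ ω (n + m) = ω₀ (n + m) := by
    conv_lhs => rw [← hω₀]
    exact (Equiv.addRight x).surjective.injective_comp_right.eq_iff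
      (a := ω (n + m)) (b := ω₀ (n + m))
  have htail : (∀ᶠ m in atTop, ω (n + m) = ω₀ (n + m)) ↔ ∀ᶠ m in atTop, ω m = ω₀ m := by
    conv_rhs => rw [← map_add_atTop_eq_nat n, eventually_map]
    simp only [add_comm]
  simpa only [Set.mem_preimage, eventuallyEqSet, Set.mem_ofPred_eq, hshift] using htail

lemma notMem_eventuallyEqSet_of_forall_ne {ω₀ ω : EnvSpace2} (h : ∀ m, ω m ≠ ω₀ m) :
    ω ∉ eventuallyEqSet ω₀ := fun hω =>
  let ⟨m, hm⟩ := hω.exists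
  h m hm

lemma Plaw_apply (S : Set EnvSpace2) :
    Plaw S = 1 / 2 * S.indicator 1 xi + 1 / 2 * S.indicator 1 xi' := by
  simp [Plaw, Measure.dirac_apply]

lemma Plaw_eq_zero {S : Set EnvSpace2} (h : xi ∉ S) (h' : xi' ∉ S) : Plaw S = 0 := by
  simp [Plaw_apply, h, h']

lemma Plaw_eq_half {S : Set EnvSpace2} (h : xi ∈ S) (h' : xi' ∉ S) : Plaw S = 1 / 2 := by
  simp [Plaw_apply, h, h']

lemma Plaw_eq_zero_or_one_of_mem_iff {S : Set EnvSpace2} (h : xi ∈ S ↔ xi' ∈ S) :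
    Plaw S = 0 ∨ Plaw S = 1 := by
  by_cases hS : xi ∈ S
  · right
    simp [Plaw_apply, hS, h.mp hS, ENNReal.inv_two_add_inv_two]
  · exact .inl (Plaw_eq_zero hS (mt h.mpr hS))

/-- (a) every `e ∈ U` fixes `ξ` and `ξ'` under `θ_{1,e}`, while
`θ_{1,0}` interchanges `ξ` and `ξ'`;  (b) `ℙ{ξ} = 1/2`, the event `{ω = ξ}` is
invariant (mod `ℙ`) under every `θ_{1,e}`, `e ∈ U`, and `{θ_{1,e} : e ∈ U}` is *not* an
ergodic family for `ℙ`;  (c) the enlarged family `{θ_{1,e} : |e|₁ ≤ 1}` *is* an ergodic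
family for `ℙ`. -/
theorem counterexample_ergodicity :
    -- (a)
    ((∀ e ∈ U2, thetaShift 1 e xi = xi ∧ thetaShift 1 e xi' = xi') ∧
      thetaShift 1 0 xi = xi' ∧ thetaShift 1 0 xi' = xi) ∧
    -- (b)
    (Plaw {ω | ω = xi} = 1 / 2 ∧
      (∀ e ∈ U2,
        Plaw ((thetaShift 1 e ⁻¹' {xi} \ {xi}) ∪ ({xi} \ thetaShift 1 e ⁻¹' {xi})) = 0) ∧
      ¬(∀ A : Set EnvSpace2, MeasurableSet A →
          (∀ e ∈ U2, thetaShift 1 e ⁻¹' A = A) → Plaw A = 0 ∨ Plaw A = 1)) ∧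
    -- (c)
    (∀ A : Set EnvSpace2, MeasurableSet A →
      (∀ e : Z2, normOne e ≤ 1 → thetaShift 1 e ⁻¹' A = A) →
      Plaw A = 0 ∨ Plaw A = 1) := by
  have hxi : xi ∈ eventuallyEqSet xi := Eventually.of_forall fun _ => rfl
  have hxi' : xi' ∉ eventuallyEqSet xi :=
    notMem_eventuallyEqSet_of_forall_ne fun m => (checkerboard_ne_swap pvec_ne_qvec m).symm
  refine ⟨⟨fun e he => ⟨thetaShift_xi_of_mem_U2 he, thetaShift_xi'_of_mem_U2 he⟩,
    thetaShift_one_zero_xi, thetaShift_one_zero_xi'⟩, ⟨?_, fun e he => ?_, fun hergodic => ?_⟩,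
    fun A _ hA => ?_⟩
  · exact Plaw_eq_half rfl xi_ne_xi'.symm
  · apply Plaw_eq_zero <;>
      simp [thetaShift_xi_of_mem_U2 he, thetaShift_xi'_of_mem_U2 he, xi_ne_xi'.symm]
  · have hinv (e : Z2) (he : e ∈ U2) :
        thetaShift 1 e ⁻¹' eventuallyEqSet xi = eventuallyEqSet xi :=
      preimage_thetaShift_eventuallyEqSet (thetaShift_xi_of_mem_U2 he)
    have hhalf := Plaw_eq_half hxi hxi'
    rcases hergodic _ (measurableSet_eventuallyEqSet xi) hinv with h | h <;> simp [hhalf] at h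
  · apply Plaw_eq_zero_or_one_of_mem_iff
    have h0 := (Set.ext_iff.mp (hA 0 (by simp [normOne])) xi).symm
    rwa [Set.mem_preimage, thetaShift_one_zero_xi] at h0

end CounterexampleErgodicity
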